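/- arXiv:1804.10958 — 2 statements merged into one kernel-verified Lean document; each statement's English description precedes it below -/
import Mathlib

section
/- Let A ⊆ ℝ^m be open, let F_1,...,F_k : A → ℝ be independent smooth functions (the Jacobian DF(x) of F = (F_1,...,F_k) has rank k for all x ∈ A), let G : A → ℝ be smooth, and set F̂ := (F_1,...,F_k,G). Then: (i) if there exists a smooth function P : F(A) → ℝ with G = P ∘ F, then the Jacobian DF̂(x) has rank k for all x ∈ A; (ii) conversely, if DF̂(x) has rank k for all x ∈ A, then G is locally dependent on F_1,...,F_k: for each x ∈ A there exist an open neighborhood U ⊆ A of x and a smooth function P : F(U) → ℝ such that G|_U = P ∘ F|_U. -/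
open Matrix Module Set Metric

noncomputable def mjac {ι κ : Type*} [Fintype ι] [DecidableEq ι] [Fintype κ]
    (F : (ι → ℝ) → (κ → ℝ)) (x : ι → ℝ) : Matrix κ ι ℝ :=
  Matrix.of fun i j => fderiv ℝ F x (Pi.single j 1) i

section auxdefs

variable {k : ℕ} {E : Type*} [NormedAddCommGroup E] [NormedSpace ℝ E]

noncomputable def snocL (f : E →L[ℝ] (Fin k → ℝ)) (g : E →L[ℝ] ℝ) :
    E →L[ℝ] (Fin (k + 1) → ℝ) :=
  ContinuousLinearMap.pi (Fin.snoc (fun i => (ContinuousLinearMap.proj i).comp f) g)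

lemma snocL_apply (f : E →L[ℝ] (Fin k → ℝ)) (g : E →L[ℝ] ℝ) (v : E) :
    snocL f g v = Fin.snoc (f v) (g v) := by
  funext i
  refine Fin.lastCases ?_ (fun j => ?_) i <;>
    simp [snocL, ContinuousLinearMap.pi_apply]

lemma hasFDerivAt_snoc {Fb : E → Fin k → ℝ} {G : E → ℝ} {f' : E →L[ℝ] (Fin k → ℝ)}
    {g' : E →L[ℝ] ℝ} {x : E} (hFb : HasFDerivAt Fb f' x) (hG : HasFDerivAt G g' x) :
    HasFDerivAt (fun y => (Fin.snoc (Fb y) (G y) : Fin (k + 1) → ℝ)) (snocL f' g') x := by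
  rw [hasFDerivAt_pi']
  intro i
  refine Fin.lastCases ?_ (fun j => ?_) i
  · have : (ContinuousLinearMap.proj (Fin.last k)).comp (snocL f' g') = g' := by
      ext v; simp [snocL_apply]
    rw [this]
    simpa using hG
  · have h1 : (ContinuousLinearMap.proj (R := ℝ) (φ := fun _ : Fin (k+1) => ℝ)
        j.castSucc).comp (snocL f' g') = (ContinuousLinearMap.proj j).comp f' := by
      ext v; simp [snocL_apply]
    rw [h1]
    have := (hasFDerivAt_pi'.1 hFb) j
    simpa using this
end auxdefs

section mjacaux

lemma mjac_mulVecLin {ι κ : Type*} [Fintype ι] [DecidableEq ι] [Fintype κ]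
    (F : (ι → ℝ) → (κ → ℝ)) (x : ι → ℝ) :
    (mjac F x).mulVecLin = (fderiv ℝ F x : (ι → ℝ) →ₗ[ℝ] (κ → ℝ)) := by
  refine LinearMap.ext fun v => funext fun i => ?_
  have hv : (fderiv ℝ F x) v = ∑ j, v j • (fderiv ℝ F x) (Pi.single j 1) := by
    conv_lhs => rw [← Finset.univ_sum_single v]
    rw [map_sum]
    congr 1
    funext j
    rw [← _root_.map_smul]
    congr 1
    rw [← Pi.single_smul, smul_eq_mul, mul_one]
  simp only [ContinuousLinearMap.coe_coe, Matrix.mulVecLin_apply, hv]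
  simp [Matrix.mulVec, dotProduct, mjac, Finset.sum_apply, mul_comm]

lemma mjac_rank {ι κ : Type*} [Fintype ι] [DecidableEq ι] [Fintype κ]
    (F : (ι → ℝ) → (κ → ℝ)) (x : ι → ℝ) :
    (mjac F x).rank = finrank ℝ (LinearMap.range ((fderiv ℝ F x) : (ι → ℝ) →ₗ[ℝ] (κ → ℝ))) := by
  rw [Matrix.rank, mjac_mulVecLin]

end mjacaux

section linalg

variable {k : ℕ} {E : Type*} [AddCommGroup E] [Module ℝ E]

lemma rank_snoc_of_comp (f : E →ₗ[ℝ] (Fin k → ℝ)) (g : E →ₗ[ℝ] ℝ)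
    (hh : E →ₗ[ℝ] (Fin (k + 1) → ℝ)) (happ : ∀ v, hh v = Fin.snoc (f v) (g v))
    (hf : Function.Surjective f) (c : (Fin k → ℝ) →ₗ[ℝ] ℝ) (hc : ∀ v, g v = c (f v)) :
    finrank ℝ (LinearMap.range hh) = k := by
  set j : (Fin k → ℝ) →ₗ[ℝ] (Fin (k + 1) → ℝ) :=
    LinearMap.pi (Fin.snoc (fun i => LinearMap.proj i) c) with hj
  have hjapp : ∀ z, j z = Fin.snoc z (c z) := by
    intro z; funext i
    refine Fin.lastCases ?_ (fun i => ?_) i <;> simp [hj, LinearMap.pi_apply]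
  have hjinj : Function.Injective j := by
    intro a b hab
    funext i
    have := congrFun hab i.castSucc
    simpa [hjapp] using this
  have hcomp : hh = j ∘ₗ f := by
    ext v
    simp [happ, hjapp, hc]
  rw [hcomp, LinearMap.range_comp, LinearMap.range_eq_top.2 hf, Submodule.map_top]
  rw [LinearMap.finrank_range_of_inj hjinj, finrank_fin_fun]

lemma ker_le_of_rank_snoc (f : E →ₗ[ℝ] (Fin k → ℝ)) (g : E →ₗ[ℝ] ℝ)
    (hh : E →ₗ[ℝ] (Fin (k + 1) → ℝ)) (happ : ∀ v, hh v = Fin.snoc (f v) (g v))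
    (hf : Function.Surjective f) (hrk : finrank ℝ (LinearMap.range hh) = k) :
    ∀ v, f v = 0 → g v = 0 := by
  intro v hv
  by_contra hg
  have hsurj : Function.Surjective hh := by
    intro t
    obtain ⟨u, hu⟩ := hf (Fin.init t)
    refine ⟨u + ((t (Fin.last k) - g u) / g v) • v, ?_⟩
    rw [happ]
    have h1 : f (u + ((t (Fin.last k) - g u) / g v) • v) = Fin.init t := by
      simp [map_add, _root_.map_smul, hv, hu]
    have h2 : g (u + ((t (Fin.last k) - g u) / g v) • v) = t (Fin.last k) := by
      simp only [map_add, _root_.map_smul, smul_eq_mul]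
      field_simp
      ring
    rw [h1, h2, Fin.snoc_init_self]
  have : finrank ℝ (LinearMap.range hh) = k + 1 := by
    rw [LinearMap.range_eq_top.2 hsurj]
    simp [finrank_top, finrank_fin_fun]
  omega

end linalg

set_option maxHeartbeats 2000000 in
/-- (i) If `G = P ∘ F` for smooth `P`, then the Jacobian of `F̂ = (F,G)` has rank `k`
everywhere; (ii) conversely, if `DF̂` has rank `k` everywhere, then `G` is locally
dependent on `F_1,…,F_k`. -/
theorem dependent_iff_rank
    (m k : ℕ)
    (A : Set (Fin m → ℝ)) (hA : IsOpen A)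
    (F : Fin k → (Fin m → ℝ) → ℝ)
    (hF : ∀ i, ContDiffOn ℝ (⊤ : ℕ∞) (F i) A)
    (hind : ∀ x ∈ A, (mjac (fun y i => F i y) x).rank = k)
    (G : (Fin m → ℝ) → ℝ) (hG : ContDiffOn ℝ (⊤ : ℕ∞) G A)
    (Fhat : Fin (k + 1) → (Fin m → ℝ) → ℝ)
    (hFhat : Fhat = Fin.snoc F G) :
    ((∃ P : (Fin k → ℝ) → ℝ,
        ContDiffOn ℝ (⊤ : ℕ∞) P ((fun y => fun i => F i y) '' A) ∧
        ∀ x ∈ A, G x = P (fun i => F i x)) →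
      ∀ x ∈ A, (mjac (fun y i => Fhat i y) x).rank = k) ∧
    ((∀ x ∈ A, (mjac (fun y i => Fhat i y) x).rank = k) →
      ∀ x ∈ A, ∃ U : Set (Fin m → ℝ), IsOpen U ∧ x ∈ U ∧ U ⊆ A ∧
        ∃ P : (Fin k → ℝ) → ℝ,
          ContDiffOn ℝ (⊤ : ℕ∞) P ((fun y => fun i => F i y) '' U) ∧
          ∀ y ∈ U, G y = P (fun i => F i y)) := by
  classical
  set Fb : (Fin m → ℝ) → (Fin k → ℝ) := fun y i => F i y with hFbdef
  have hFbs : ContDiffOn ℝ (⊤ : ℕ∞) Fb A := contDiffOn_pi.2 hF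
  have hhatfun : (fun y i => Fhat i y) = fun y => (Fin.snoc (Fb y) (G y) : Fin (k+1) → ℝ) := by
    subst hFhat
    funext y i
    refine Fin.lastCases ?_ (fun j => ?_) i <;> simp [hFbdef]
  have hFbAt : ∀ x ∈ A, ContDiffAt ℝ (⊤ : ℕ∞) Fb x := fun x hx => hFbs.contDiffAt (hA.mem_nhds hx)
  have hFbD : ∀ x ∈ A, HasFDerivAt Fb (fderiv ℝ Fb x) x := fun x hx =>
    ((hFbAt x hx).differentiableAt (by simp)).hasFDerivAt
  have hGAt : ∀ x ∈ A, ContDiffAt ℝ (⊤ : ℕ∞) G x := fun x hx => hG.contDiffAt (hA.mem_nhds hx)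
  have hGD : ∀ x ∈ A, HasFDerivAt G (fderiv ℝ G x) x := fun x hx =>
    ((hGAt x hx).differentiableAt (by simp)).hasFDerivAt
  have hrkF : ∀ x ∈ A,
      finrank ℝ (LinearMap.range ((fderiv ℝ Fb x) : (Fin m → ℝ) →ₗ[ℝ] (Fin k → ℝ))) = k := by
    intro x hx
    have h := hind x hx
    rwa [mjac_rank] at h
  have hsurj : ∀ x ∈ A,
      LinearMap.range ((fderiv ℝ Fb x) : (Fin m → ℝ) →ₗ[ℝ] (Fin k → ℝ)) = ⊤ := by
    intro x hx
    exact Submodule.eq_top_of_finrank_eq ((hrkF x hx).trans (finrank_fin_fun ℝ).symm)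
  have hsurjF : ∀ x ∈ A, Function.Surjective (fderiv ℝ Fb x) := fun x hx =>
    LinearMap.range_eq_top.1 (hsurj x hx)
  have hmjachat : ∀ x ∈ A, (mjac (fun y i => Fhat i y) x).rank =
      finrank ℝ (LinearMap.range
        ((snocL (fderiv ℝ Fb x) (fderiv ℝ G x)) : (Fin m → ℝ) →ₗ[ℝ] (Fin (k+1) → ℝ))) := by
    intro x hx
    have hd : HasFDerivAt (fun y => (Fin.snoc (Fb y) (G y) : Fin (k+1) → ℝ))
        (snocL (fderiv ℝ Fb x) (fderiv ℝ G x)) x := hasFDerivAt_snoc (hFbD x hx) (hGD x hx)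
    rw [hhatfun, mjac_rank, hd.fderiv]
  constructor
  · rintro ⟨P, hP, hPF⟩ x hx
    have hnhds : Fb '' A ∈ nhds (Fb x) := by
      have hst : HasStrictFDerivAt Fb (fderiv ℝ Fb x) x :=
        (hFbAt x hx).hasStrictFDerivAt (by simp)
      rw [← hst.map_nhds_eq_of_surj (hsurj x hx)]
      exact Filter.image_mem_map (hA.mem_nhds hx)
    have hPAt : ContDiffAt ℝ (⊤ : ℕ∞) P (Fb x) := hP.contDiffAt hnhds
    have heq : G =ᶠ[nhds x] P ∘ Fb :=
      Filter.eventuallyEq_of_mem (hA.mem_nhds hx) (fun y hy => hPF y hy)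
    have hdG : fderiv ℝ G x = (fderiv ℝ P (Fb x)).comp (fderiv ℝ Fb x) := by
      rw [heq.fderiv_eq,
        fderiv_comp x (hPAt.differentiableAt (by simp)) ((hFbAt x hx).differentiableAt (by simp))]
    rw [hmjachat x hx]
    refine rank_snoc_of_comp _ _ _ (fun v => snocL_apply _ _ v) (hsurjF x hx)
      ((fderiv ℝ P (Fb x)) : (Fin k → ℝ) →ₗ[ℝ] ℝ) ?_
    intro v
    rw [hdG]
    rfl
  · intro hrank x hx
    -- the differential of G vanishes on the kernel of the differential of F, at every point of A
    have hkerG : ∀ y ∈ A, ∀ v, fderiv ℝ Fb y v = 0 → fderiv ℝ G y v = 0 := by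
      intro y hy v hv
      have h := hrank y hy
      rw [hmjachat y hy] at h
      exact ker_le_of_rank_snoc _ _ _ (fun v => snocL_apply _ _ v) (hsurjF y hy) h v hv
    -- set up the complement of the kernel at x and the map Φ = (F, proj)
    set f' := fderiv ℝ Fb x with hf'def
    set Kc := LinearMap.ker ((f' : (Fin m → ℝ) →ₗ[ℝ] (Fin k → ℝ))) with hKcdef
    obtain ⟨p, hp⟩ := Submodule.exists_isCompl Kc
    set q : (Fin m → ℝ) →ₗ[ℝ] Kc := Kc.linearProjOfIsCompl p hp with hqdef
    set qc : (Fin m → ℝ) →L[ℝ] Kc := LinearMap.toContinuousLinearMap q with hqcdef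
    have hqc_app : ∀ v, qc v = q v := fun v => rfl
    set Φ : (Fin m → ℝ) → (Fin k → ℝ) × Kc := fun y => (Fb y, qc y) with hΦdef
    have hΦs : ContDiffOn ℝ (⊤ : ℕ∞) Φ A := hFbs.prodMk (qc.contDiff.contDiffOn)
    have hΦAt : ∀ y ∈ A, ContDiffAt ℝ (⊤ : ℕ∞) Φ y := fun y hy => hΦs.contDiffAt (hA.mem_nhds hy)
    have hΦD : ∀ y ∈ A, HasFDerivAt Φ ((fderiv ℝ Fb y).prod qc) y := fun y hy =>
      (hFbD y hy).prodMk qc.hasFDerivAt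
    have hfderivΦ : ∀ y ∈ A, fderiv ℝ Φ y = (fderiv ℝ Fb y).prod qc := fun y hy =>
      (hΦD y hy).fderiv
    -- the derivative of Φ at x is a linear equivalence
    have hinj : Function.Injective ((f'.prod qc : (Fin m → ℝ) →L[ℝ] (Fin k → ℝ) × Kc) :
        (Fin m → ℝ) →ₗ[ℝ] (Fin k → ℝ) × Kc) := by
      rw [← LinearMap.ker_eq_bot, LinearMap.ker_eq_bot']
      intro v hv
      have h1 : f' v = 0 ∧ qc v = 0 := by
        have := Prod.ext_iff.1 hv
        simpa using this
      have hvK : v ∈ Kc := by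
        rw [hKcdef, LinearMap.mem_ker]
        exact h1.1
      have h2 : q v = ⟨v, hvK⟩ := Submodule.linearProjOfIsCompl_apply_left hp ⟨v, hvK⟩
      have h3 : q v = 0 := by rw [← hqc_app]; exact h1.2
      have h4 := congrArg Subtype.val (h2.symm.trans h3)
      simpa using h4
    have hdim : finrank ℝ (Fin m → ℝ) = finrank ℝ ((Fin k → ℝ) × Kc) := by
      have h1 := LinearMap.finrank_range_add_finrank_ker
        ((f' : (Fin m → ℝ) →ₗ[ℝ] (Fin k → ℝ)))
      rw [hrkF x hx] at h1
      rw [Module.finrank_prod, ← h1, finrank_fin_fun]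
    set eqv : (Fin m → ℝ) ≃L[ℝ] ((Fin k → ℝ) × Kc) :=
      (LinearMap.linearEquivOfInjective _ hinj hdim).toContinuousLinearEquiv with heqvdef
    have heqv_app : ∀ v, eqv v = (f'.prod qc) v := fun v => rfl
    have heqv_coe : (eqv : (Fin m → ℝ) →L[ℝ] ((Fin k → ℝ) × Kc)) = f'.prod qc := by
      ext v <;> rfl
    have hΦDx : HasFDerivAt Φ (eqv : (Fin m → ℝ) →L[ℝ] ((Fin k → ℝ) × Kc)) x := by
      rw [heqv_coe]; exact hΦD x hx
    -- inverse function theorem setup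
    set ph := (hΦAt x hx).toOpenPartialHomeomorph Φ hΦDx (by simp) with hphdef
    have hphcoe : ⇑ph = Φ := rfl
    have hxsrc : x ∈ ph.source := (hΦAt x hx).mem_toOpenPartialHomeomorph_source hΦDx (by simp)
    have hxtgt : Φ x ∈ ph.target := (hΦAt x hx).image_mem_toOpenPartialHomeomorph_target hΦDx (by simp)
    -- the set of points where the derivative of Φ is invertible is open
    set u : (Fin m → ℝ) → ((Fin m → ℝ) →L[ℝ] (Fin m → ℝ)) :=
      fun y => (eqv.symm : ((Fin k → ℝ) × Kc) →L[ℝ] (Fin m → ℝ)).comp (fderiv ℝ Φ y) with hudef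
    have hu_cont : ContinuousOn u A :=
      continuousOn_const.clm_comp (hΦs.continuousOn_fderiv_of_isOpen hA (by simp))
    set V := A ∩ u ⁻¹' {g | IsUnit g} with hVdef
    have hVopen : IsOpen V := hu_cont.isOpen_inter_preimage hA Units.isOpen
    have hVA : V ⊆ A := inter_subset_left
    have hxV : x ∈ V := by
      refine ⟨hx, ?_⟩
      have hux : u x = ContinuousLinearMap.id ℝ (Fin m → ℝ) := by
        ext v
        simp [hudef, hΦDx.fderiv]
      simp only [mem_preimage, mem_setOf_eq, hux]
      exact isUnit_one
    -- at every point of V, the derivative of Φ is a linear equivalence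
    have hey : ∀ y ∈ V, ∃ e : (Fin m → ℝ) ≃L[ℝ] ((Fin k → ℝ) × Kc),
        (e : (Fin m → ℝ) →L[ℝ] ((Fin k → ℝ) × Kc)) = fderiv ℝ Φ y := by
      intro y hy
      have hunit : IsUnit (u y) := hy.2
      refine ⟨((ContinuousLinearEquiv.unitsEquiv ℝ (Fin m → ℝ)) hunit.unit).trans eqv, ?_⟩
      refine ContinuousLinearMap.ext fun v => ?_
      have h1 : (u y) v = eqv.symm (fderiv ℝ Φ y v) := rfl
      simp only [ContinuousLinearEquiv.coe_coe, ContinuousLinearEquiv.trans_apply,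
        ContinuousLinearEquiv.unitsEquiv_apply, IsUnit.unit_spec, h1,
        ContinuousLinearEquiv.apply_symm_apply]
    -- choose a product ball around Φ x inside the good region
    set W := ph.target ∩ ph.symm ⁻¹' V with hWdef
    have hWopen : IsOpen W := by
      have hc := ph.symm.continuousOn
      rw [ph.symm_source] at hc
      exact hc.isOpen_inter_preimage ph.open_target hVopen
    have hΦxW : Φ x ∈ W := by
      refine ⟨hxtgt, ?_⟩
      have hsymmx : ph.symm (Φ x) = x := by
        rw [← hphcoe]; exact ph.left_inv hxsrc
      simp only [mem_preimage, hsymmx]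
      exact hxV
    obtain ⟨r, hr0, hball⟩ := Metric.isOpen_iff.1 hWopen _ hΦxW
    -- here is the neighborhood U
    set U := ph.symm '' (ball (Φ x) r) with hUdef
    have hsub_target : ball (Φ x) r ⊆ ph.target := hball.trans inter_subset_left
    have hUeq : U = ph.source ∩ Φ ⁻¹' (ball (Φ x) r) := by
      rw [hUdef, ph.symm_image_eq_source_inter_preimage hsub_target, hphcoe]
    have hUopen : IsOpen U := by
      rw [hUeq]
      have hc := ph.continuousOn
      rw [hphcoe] at hc
      exact hc.isOpen_inter_preimage ph.open_source isOpen_ball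
    have hxU : x ∈ U := by
      rw [hUeq]
      exact ⟨hxsrc, mem_ball_self hr0⟩
    have hUV : U ⊆ V := by
      rintro y ⟨z, hz, rfl⟩
      exact (hball hz).2
    have hUA : U ⊆ A := fun y hy => hVA (hUV hy)
    have hUball : ∀ y ∈ U, Φ y ∈ ball (Φ x) r := by
      intro y hy
      rw [hUeq] at hy
      exact hy.2
    have hUinv : ∀ y ∈ U, ph.symm (Φ y) = y := by
      intro y hy
      rw [hUeq] at hy
      rw [← hphcoe]
      exact ph.left_inv hy.1
    -- facts about points of the ball
    have hballW : ∀ a ∈ ball (Φ x) r, a ∈ ph.target ∧ ph.symm a ∈ V :=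
      fun a ha => ⟨hsub_target ha, (hball ha).2⟩
    have hprodball : ∀ z ∈ ball (Fb x) r, ∀ w ∈ ball (qc x) r,
        ((z, w) : (Fin k → ℝ) × Kc) ∈ ball (Φ x) r := by
      intro z hz w hw
      have : ((z, w) : (Fin k → ℝ) × Kc) ∈ ball (Fb x) r ×ˢ ball (qc x) r := ⟨hz, hw⟩
      rwa [ball_prod_same] at this
    -- derivative and smoothness of the local inverse at points of the ball
    have hinv_deriv : ∀ a ∈ ball (Φ x) r, ∃ e : (Fin m → ℝ) ≃L[ℝ] ((Fin k → ℝ) × Kc),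
        (e : (Fin m → ℝ) →L[ℝ] ((Fin k → ℝ) × Kc)) = fderiv ℝ Φ (ph.symm a) ∧
        HasFDerivAt (⇑ph.symm)
          ((e.symm : ((Fin k → ℝ) × Kc) →L[ℝ] (Fin m → ℝ))) a ∧
        ContDiffAt ℝ (⊤ : ℕ∞) (⇑ph.symm) a := by
      intro a ha
      obtain ⟨haT, haV⟩ := hballW a ha
      obtain ⟨e, he⟩ := hey _ haV
      have hΦe : HasFDerivAt (⇑ph) (e : (Fin m → ℝ) →L[ℝ] ((Fin k → ℝ) × Kc)) (ph.symm a) := by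
        rw [hphcoe, he]
        exact ((hΦAt _ (hVA haV)).differentiableAt (by simp)).hasFDerivAt
      refine ⟨e, he, ph.hasFDerivAt_symm haT hΦe, ph.contDiffAt_symm haT hΦe ?_⟩
      rw [hphcoe]
      exact hΦAt _ (hVA haV)
    -- the candidate function P
    set P : (Fin k → ℝ) → ℝ := fun z => G (ph.symm (z, qc x)) with hPdef
    -- G ∘ Ψ is constant in the second variable on the product ball
    have hfactor : ∀ z ∈ ball (Fb x) r, ∀ w ∈ ball (qc x) r,
        G (ph.symm (z, w)) = G (ph.symm (z, qc x)) := by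
      intro z hz w hw
      set h : Kc → ℝ := fun w => G (ph.symm (z, w)) with hhdef
      have hder : ∀ w' ∈ ball (qc x) r, HasFDerivAt h (0 : Kc →L[ℝ] ℝ) w' := by
        intro w' hw'
        have ha : ((z, w') : (Fin k → ℝ) × Kc) ∈ ball (Φ x) r := hprodball z hz w' hw'
        obtain ⟨haT, haV⟩ := hballW _ ha
        obtain ⟨e, he, hΨd, _⟩ := hinv_deriv _ ha
        set y₀ := ph.symm (z, w') with hy₀def
        have hy₀A : y₀ ∈ A := hVA haV
        have hline : HasFDerivAt (fun w : Kc => ((z, w) : (Fin k → ℝ) × Kc))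
            ((0 : Kc →L[ℝ] (Fin k → ℝ)).prod (ContinuousLinearMap.id ℝ Kc)) w' :=
          (hasFDerivAt_const z w').prodMk (hasFDerivAt_id w')
        have htot := (hGD y₀ hy₀A).comp w' (hΨd.comp w' hline)
        have hzero : (fderiv ℝ G y₀).comp
            (((e.symm : ((Fin k → ℝ) × Kc) →L[ℝ] (Fin m → ℝ))).comp
              ((0 : Kc →L[ℝ] (Fin k → ℝ)).prod (ContinuousLinearMap.id ℝ Kc))) =
            (0 : Kc →L[ℝ] ℝ) := by
          ext w''
          set v := e.symm ((0 : Fin k → ℝ), w'') with hvdef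
          have hev : e v = ((0 : Fin k → ℝ), w'') := e.apply_symm_apply _
          have hΦv : fderiv ℝ Φ y₀ v = ((0 : Fin k → ℝ), w'') := by
            rw [← he]; exact hev
          have hFbv : fderiv ℝ Fb y₀ v = 0 := by
            have := hfderivΦ y₀ hy₀A
            rw [this] at hΦv
            exact (Prod.ext_iff.1 hΦv).1
          have hGv : fderiv ℝ G y₀ v = 0 := hkerG y₀ hy₀A v hFbv
          simpa [hvdef] using hGv
        rw [hzero] at htot
        simpa [hhdef, Function.comp_def] using htot
      have hdiff : DifferentiableOn ℝ h (ball (qc x) r) := fun w' hw' =>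
        ((hder w' hw').differentiableAt).differentiableWithinAt
      have hzero : ∀ w' ∈ ball (qc x) r, fderivWithin ℝ h (ball (qc x) r) w' = 0 := by
        intro w' hw'
        rw [fderivWithin_of_isOpen isOpen_ball hw']
        exact (hder w' hw').fderiv
      show h w = h (qc x)
      exact (convex_ball _ _).is_const_of_fderivWithin_eq_zero hdiff hzero hw
        (mem_ball_self hr0)
    -- conclusion
    refine ⟨U, hUopen, hxU, hUA, P, ?_, ?_⟩
    · -- smoothness of P on Fb '' U
      have himg : Fb '' U ⊆ ball (Fb x) r := by
        rintro _ ⟨y, hy, rfl⟩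
        have := hUball y hy
        rw [← ball_prod_same] at this
        exact this.1
      intro z hz
      have hzball : z ∈ ball (Fb x) r := himg hz
      have ha : ((z, qc x) : (Fin k → ℝ) × Kc) ∈ ball (Φ x) r :=
        hprodball z hzball _ (mem_ball_self hr0)
      obtain ⟨haT, haV⟩ := hballW _ ha
      obtain ⟨e, he, hΨd, hΨc⟩ := hinv_deriv _ ha
      have hcP : ContDiffAt ℝ (⊤ : ℕ∞) P z := by
        have hpair : ContDiffAt ℝ (⊤ : ℕ∞) (fun z' : Fin k → ℝ => ((z', qc x) : (Fin k → ℝ) × Kc)) z :=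
          contDiffAt_id.prodMk contDiffAt_const
        have := ((hGAt _ (hVA haV)).comp z (hΨc.comp z hpair))
        simpa [hPdef, Function.comp_def] using this
      exact hcP.contDiffWithinAt
    · -- G = P ∘ F on U
      intro y hy
      have hΦy : Φ y ∈ ball (Φ x) r := hUball y hy
      have hΦy' : (Fb y, qc y) ∈ ball (Fb x) r ×ˢ ball (qc x) r := by
        rw [ball_prod_same]
        exact hΦy
      have h1 : G y = G (ph.symm (Fb y, qc y)) := by
        rw [show ((Fb y, qc y) : (Fin k → ℝ) × Kc) = Φ y from rfl, hUinv y hy]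
      rw [h1, hfactor _ hΦy'.1 _ hΦy'.2]
end

section
/- Let A ⊆ ℝ^m be open, F_1,...,F_k : A → ℝ independent smooth functions (the Jacobian of F = (F_1,...,F_k) has rank k everywhere on A), and G : A → ℝ smooth. Then A can be written as a disjoint union A = D ∪ I ∪ B where D and I are open subsets of ℝ^m, B is closed in A and has empty interior, G is locally dependent on F_1,...,F_k along D (for each x ∈ D there are an open neighborhood U ⊆ D of x and a smooth P : F(U) → ℝ with G|_U = P ∘ F|_U), and the functions F_1,...,F_k,G are independent along I (the Jacobian of (F_1,...,F_k,G) has rank k+1 at every point of I). -/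
open Matrix

lemma mjac_rank_eq {ι κ : Type*} [Fintype ι] [DecidableEq ι] [Fintype κ]
    (F : (ι → ℝ) → (κ → ℝ)) (x : ι → ℝ) :
    (mjac F x).rank
      = Module.finrank ℝ (LinearMap.range ((fderiv ℝ F x : (ι → ℝ) →L[ℝ] (κ → ℝ)) : (ι → ℝ) →ₗ[ℝ] (κ → ℝ))) := by
  have : mjac F x = LinearMap.toMatrix'
      ((fderiv ℝ F x : (ι → ℝ) →L[ℝ] (κ → ℝ)) : (ι → ℝ) →ₗ[ℝ] (κ → ℝ)) := by
    ext i j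
    rw [LinearMap.toMatrix'_apply]
    have : (Pi.single j 1 : ι → ℝ) = fun j' => if j' = j then 1 else 0 :=
      funext fun j' => Pi.single_apply j 1 j'
    simp [mjac, this]
  rw [this, Matrix.rank, ← Matrix.toLin'_apply', Matrix.toLin'_toMatrix']

set_option maxHeartbeats 2000000 in
set_option synthInstance.maxHeartbeats 1000000 in
/-- Decomposition `A = D ∪ I ∪ B`: `D`, `I` open, `B` closed in `A` with empty interior,
`G` locally dependent on `F_1,…,F_k` along `D`, and `F_1,…,F_k,G` independent along `I`. -/
theorem dependence_decomposition
    (m k : ℕ)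
    (A : Set (Fin m → ℝ)) (hA : IsOpen A)
    (F : Fin k → (Fin m → ℝ) → ℝ)
    (hF : ∀ i, ContDiffOn ℝ (⊤ : ℕ∞) (F i) A)
    (hind : ∀ x ∈ A, (mjac (fun y i => F i y) x).rank = k)
    (G : (Fin m → ℝ) → ℝ) (hG : ContDiffOn ℝ (⊤ : ℕ∞) G A) :
    ∃ D I B : Set (Fin m → ℝ),
      IsOpen D ∧ IsOpen I ∧
      D ⊆ A ∧ I ⊆ A ∧ B ⊆ A ∧
      Disjoint D I ∧ Disjoint D B ∧ Disjoint I B ∧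
      D ∪ I ∪ B = A ∧
      (∃ C : Set (Fin m → ℝ), IsClosed C ∧ B = C ∩ A) ∧
      interior B = ∅ ∧
      (∀ x ∈ D, ∃ U : Set (Fin m → ℝ), IsOpen U ∧ x ∈ U ∧ U ⊆ D ∧
        ∃ P : (Fin k → ℝ) → ℝ,
          ContDiffOn ℝ (⊤ : ℕ∞) P ((fun y => fun i => F i y) '' U) ∧
          ∀ y ∈ U, G y = P (fun i => F i y)) ∧
      (∀ x ∈ I,
        (mjac (fun y i => (Fin.snoc F G : Fin (k + 1) → (Fin m → ℝ) → ℝ) i y) x).rank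
          = k + 1) := by
  classical

  set Fall : (Fin m → ℝ) → (Fin (k + 1) → ℝ) :=
    fun y i => (Fin.snoc F G : Fin (k + 1) → (Fin m → ℝ) → ℝ) i y with hFalldef
  set Fvec : (Fin m → ℝ) → (Fin k → ℝ) := fun y i => F i y with hFvecdef
  -- smoothness of the combined maps
  have hFvec : ContDiffOn ℝ (⊤ : ℕ∞) Fvec A := contDiffOn_pi.2 hF
  have hFall : ContDiffOn ℝ (⊤ : ℕ∞) Fall A := by
    refine contDiffOn_pi.2 fun i => ?_
    refine Fin.lastCases ?_ (fun j => ?_) i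
    · simpa [hFalldef] using hG
    · simpa [hFalldef] using hF j
  -- projections
  set π : (Fin (k + 1) → ℝ) →L[ℝ] (Fin k → ℝ) :=
    ContinuousLinearMap.pi (fun i : Fin k => ContinuousLinearMap.proj i.castSucc) with hπdef
  set πl : (Fin (k + 1) → ℝ) →L[ℝ] ℝ := ContinuousLinearMap.proj (Fin.last k) with hπldef
  have hFveccomp : Fvec = ⇑π ∘ Fall := by
    funext y
    ext i
    simp [hFvecdef, hFalldef, hπdef]
  have hGcomp : G = ⇑πl ∘ Fall := by
    funext y
    simp [hFalldef, hπldef]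
  have hFalldiff : ∀ y ∈ A, DifferentiableAt ℝ Fall y := fun y hy =>
    (hFall.contDiffAt (hA.mem_nhds hy)).differentiableAt (by simp)
  have hFvecdiff : ∀ y ∈ A, DifferentiableAt ℝ Fvec y := fun y hy =>
    (hFvec.contDiffAt (hA.mem_nhds hy)).differentiableAt (by simp)
  have hGdiff : ∀ y ∈ A, DifferentiableAt ℝ G y := fun y hy =>
    (hG.contDiffAt (hA.mem_nhds hy)).differentiableAt (by simp)
  have hDf : ∀ y ∈ A, fderiv ℝ Fvec y = π.comp (fderiv ℝ Fall y) := by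
    intro y hy
    rw [hFveccomp]
    exact (π.hasFDerivAt.comp y (hFalldiff y hy).hasFDerivAt).fderiv
  have hDG : ∀ y ∈ A, fderiv ℝ G y = πl.comp (fderiv ℝ Fall y) := by
    intro y hy
    rw [hGcomp]
    exact (πl.hasFDerivAt.comp y (hFalldiff y hy).hasFDerivAt).fderiv
  have hrangef : ∀ x ∈ A,
      Module.finrank ℝ (LinearMap.range ((fderiv ℝ Fvec x : (Fin m → ℝ) →L[ℝ] (Fin k → ℝ)) : (Fin m → ℝ) →ₗ[ℝ] (Fin k → ℝ))) = k := by
    intro x hx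
    rw [← mjac_rank_eq]
    exact hind x hx
  -- the key kernel inclusion on the "dependent" set
  have key : ∀ y ∈ A, ¬ Function.Surjective (fderiv ℝ Fall y) →
      ∀ v : (Fin m → ℝ), fderiv ℝ Fvec y v = 0 → fderiv ℝ G y v = 0 := by
    intro y hy hns v hv
    set Ψl : (Fin m → ℝ) →ₗ[ℝ] (Fin (k + 1) → ℝ) := ((fderiv ℝ Fall y : (Fin m → ℝ) →L[ℝ] (Fin (k+1) → ℝ)) : (Fin m → ℝ) →ₗ[ℝ] (Fin (k+1) → ℝ)) with hΨl
    set Dfl : (Fin m → ℝ) →ₗ[ℝ] (Fin k → ℝ) := ((fderiv ℝ Fvec y : (Fin m → ℝ) →L[ℝ] (Fin k → ℝ)) : (Fin m → ℝ) →ₗ[ℝ] (Fin k → ℝ)) with hDfl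
    have hker1 : LinearMap.ker Ψl ≤ LinearMap.ker Dfl := by
      intro v hv
      rw [LinearMap.mem_ker] at hv ⊢
      rw [hDfl]
      simp only [ContinuousLinearMap.coe_coe]
      rw [hDf y hy]
      simp only [ContinuousLinearMap.comp_apply]
      have : fderiv ℝ Fall y v = 0 := hv
      rw [this]
      simp
    have r1 : Module.finrank ℝ (LinearMap.range Ψl) + Module.finrank ℝ (LinearMap.ker Ψl)
        = m := by
      rw [LinearMap.finrank_range_add_finrank_ker Ψl]
      simp [Module.finrank_fin_fun]
    have r2 : Module.finrank ℝ (LinearMap.range Dfl) + Module.finrank ℝ (LinearMap.ker Dfl)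
        = m := by
      rw [LinearMap.finrank_range_add_finrank_ker Dfl]
      simp [Module.finrank_fin_fun]
    have hr2 : Module.finrank ℝ (LinearMap.range Dfl) = k := hrangef y hy
    have hΨle : Module.finrank ℝ (LinearMap.range Ψl) ≤ k := by
      have hne : LinearMap.range Ψl ≠ ⊤ := by
        intro htop
        exact hns (by
          have := LinearMap.range_eq_top.1 htop
          simpa [hΨl] using this)
      have := Submodule.finrank_lt hne
      rw [Module.finrank_fin_fun] at this
      omega
    have hkerle : Module.finrank ℝ (LinearMap.ker Dfl) ≤ Module.finrank ℝ (LinearMap.ker Ψl) := by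
      omega
    have heq : LinearMap.ker Ψl = LinearMap.ker Dfl :=
      Submodule.eq_of_le_of_finrank_le hker1 hkerle
    have hvΨ : v ∈ LinearMap.ker Ψl := by
      rw [heq, LinearMap.mem_ker]
      simpa [hDfl] using hv
    rw [LinearMap.mem_ker] at hvΨ
    rw [hDG y hy]
    simp only [ContinuousLinearMap.comp_apply]
    have : fderiv ℝ Fall y v = 0 := hvΨ
    rw [this]
    simp
  -- continuity of the Jacobian
  have hΨcont : ContinuousOn (fun x => fderiv ℝ Fall x) A :=
    hFall.continuousOn_fderiv_of_isOpen hA (by simp)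
  have hFveccont : ContinuousOn (fun x => fderiv ℝ Fvec x) A :=
    hFvec.continuousOn_fderiv_of_isOpen hA (by simp)
  -- the surjectivity set is characterized by a nonvanishing determinant
  set N : (Fin m → ℝ) → Matrix (Fin (k + 1)) (Fin m) ℝ := fun x => mjac Fall x with hNdef
  set Q : (Fin m → ℝ) → Matrix (Fin (k + 1)) (Fin (k + 1)) ℝ := fun x => N x * (N x)ᵀ with hQdef
  have hNcont : ContinuousOn N A := by
    refine continuousOn_pi.2 ?_
    intro i
    rw [continuousOn_pi]
    intro j
    have : (fun x => N x i j) = (fun f : (Fin m → ℝ) →L[ℝ] (Fin (k + 1) → ℝ) => f (Pi.single j 1) i)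
        ∘ (fun x => fderiv ℝ Fall x) := rfl
    rw [this]
    exact (((continuous_apply i).comp
      (ContinuousLinearMap.apply ℝ (Fin (k + 1) → ℝ) (Pi.single j 1)).continuous)).comp_continuousOn
      hΨcont
  have hQdet : ContinuousOn (fun x => (Q x).det) A := by
    have : Continuous fun M : Matrix (Fin (k + 1)) (Fin m) ℝ => (M * Mᵀ).det :=
      (continuous_id.matrix_mul continuous_id.matrix_transpose).matrix_det
    exact this.comp_continuousOn hNcont
  have hsurj_iff : ∀ x ∈ A, (Function.Surjective (fderiv ℝ Fall x) ↔ (Q x).det ≠ 0) := by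
    intro x hx
    have hrk : (N x).rank = Module.finrank ℝ
        (LinearMap.range ((fderiv ℝ Fall x : (Fin m → ℝ) →L[ℝ] _) : (Fin m → ℝ) →ₗ[ℝ] (Fin (k + 1) → ℝ))) :=
      mjac_rank_eq Fall x
    constructor
    · intro hs
      have htop : LinearMap.range ((fderiv ℝ Fall x : (Fin m → ℝ) →L[ℝ] _) : (Fin m → ℝ) →ₗ[ℝ] (Fin (k + 1) → ℝ)) = ⊤ :=
        LinearMap.range_eq_top.2 (by simpa using hs)
      have hNrank : (N x).rank = k + 1 := by
        rw [hrk, htop]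
        simp [Module.finrank_fin_fun]
      have hQrank : (Q x).rank = k + 1 := by
        rw [hQdef]
        simp only
        rw [Matrix.rank_self_mul_transpose]
        exact hNrank
      have hQtop : LinearMap.range (Q x).mulVecLin = ⊤ := by
        apply Submodule.eq_top_of_finrank_eq
        rw [← Matrix.rank]
        rw [hQrank]
        simp [Module.finrank_fin_fun]
      have hQsurj : Function.Surjective (Q x).mulVec := by
        have := LinearMap.range_eq_top.1 hQtop
        simpa [Matrix.coe_mulVecLin] using this
      have := Matrix.mulVec_surjective_iff_isUnit.1 hQsurj
      intro h0
      rw [Matrix.isUnit_iff_isUnit_det, isUnit_iff_ne_zero] at this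
      exact this h0
    · intro hdet
      have hQunit : IsUnit (Q x) :=
        (Matrix.isUnit_iff_isUnit_det _).2 (isUnit_iff_ne_zero.2 hdet)
      have hQrank : (Q x).rank = k + 1 := by
        rw [Matrix.rank_of_isUnit _ hQunit]
        simp
      have hNrank : (N x).rank = k + 1 := by
        rw [← Matrix.rank_self_mul_transpose]
        exact hQrank
      have htop : LinearMap.range ((fderiv ℝ Fall x : (Fin m → ℝ) →L[ℝ] _) : (Fin m → ℝ) →ₗ[ℝ] (Fin (k + 1) → ℝ)) = ⊤ := by
        apply Submodule.eq_top_of_finrank_eq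
        rw [← hrk, hNrank]
        simp [Module.finrank_fin_fun]
      have := LinearMap.range_eq_top.1 htop
      simpa using this
  -- the decomposition
  set I : Set (Fin m → ℝ) := {x ∈ A | (Q x).det ≠ 0} with hIdef
  set T : Set (Fin m → ℝ) := A \ I with hTdef
  set D : Set (Fin m → ℝ) := interior T with hDdef
  set B : Set (Fin m → ℝ) := T \ D with hBdef
  have hIopen : IsOpen I := by
    have : I = A ∩ (fun x => (Q x).det) ⁻¹' {0}ᶜ := by
      ext x
      simp [hIdef]
    rw [this]
    exact hQdet.isOpen_inter_preimage hA isOpen_compl_singleton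
  have hIsubA : I ⊆ A := fun x hx => hx.1
  have hTsubA : T ⊆ A := Set.diff_subset
  have hDsubT : D ⊆ T := interior_subset
  have hDsubA : D ⊆ A := hDsubT.trans hTsubA
  have hBsubA : B ⊆ A := (Set.diff_subset).trans hTsubA
  refine ⟨D, I, B, isOpen_interior, hIopen, hDsubA, hIsubA, hBsubA, ?_, ?_, ?_, ?_, ?_, ?_, ?_, ?_⟩
  · -- Disjoint D I
    rw [Set.disjoint_left]
    intro x hxD hxI
    exact (hDsubT hxD).2 hxI
  · -- Disjoint D B
    rw [Set.disjoint_left]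
    intro x hxD hxB
    exact hxB.2 hxD
  · -- Disjoint I B
    rw [Set.disjoint_left]
    intro x hxI hxB
    exact hxB.1.2 hxI
  · -- union
    ext x
    simp only [Set.mem_union, hBdef, hTdef, Set.mem_diff]
    constructor
    · rintro ((hx | hx) | hx)
      · exact hDsubA hx
      · exact hIsubA hx
      · exact hx.1.1
    · intro hx
      by_cases hI : x ∈ I
      · exact Or.inl (Or.inr hI)
      · by_cases hD : x ∈ D
        · exact Or.inl (Or.inl hD)
        · exact Or.inr ⟨⟨hx, hI⟩, hD⟩
  · -- B closed in A
    refine ⟨(D ∪ I)ᶜ, (isOpen_interior.union hIopen).isClosed_compl, ?_⟩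
    ext x
    simp only [hBdef, hTdef, Set.mem_diff, Set.mem_inter_iff, Set.mem_compl_iff, Set.mem_union]
    constructor
    · rintro ⟨⟨hxA, hxI⟩, hxD⟩
      exact ⟨fun h => h.elim hxD hxI, hxA⟩
    · rintro ⟨h, hxA⟩
      push_neg at h
      exact ⟨⟨hxA, h.2⟩, h.1⟩
  · -- interior B = ∅
    rw [Set.eq_empty_iff_forall_notMem]
    intro x hx
    have h1 : x ∈ D := interior_mono (Set.diff_subset) hx
    have h2 : x ∈ B := interior_subset hx
    exact h2.2 h1
  · -- the hard part : local dependence along D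
    intro x0 hx0
    have hx0T : x0 ∈ T := interior_subset hx0
    have hx0A : x0 ∈ A := hx0T.1
    set K : Submodule ℝ (Fin m → ℝ) :=
      LinearMap.ker ((fderiv ℝ Fvec x0 : (Fin m → ℝ) →L[ℝ] (Fin k → ℝ)) :
        (Fin m → ℝ) →ₗ[ℝ] (Fin k → ℝ)) with hKdef
    obtain ⟨K', hK'⟩ := Submodule.exists_isCompl K
    set projK : (Fin m → ℝ) →ₗ[ℝ] K := K.linearProjOfIsCompl K' hK' with hprojdef
    set projKc : (Fin m → ℝ) →L[ℝ] K := LinearMap.toContinuousLinearMap projK with hprojcdef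
    set H : (Fin m → ℝ) → (Fin k → ℝ) × K := fun y => (Fvec y, projKc y) with hHdef
    set DH : (Fin m → ℝ) → ((Fin m → ℝ) →L[ℝ] ((Fin k → ℝ) × K)) :=
      fun y => (fderiv ℝ Fvec y).prod projKc with hDHdef
    have hDHy : ∀ y ∈ A, HasFDerivAt H (DH y) y := fun y hy =>
      ((hFvecdiff y hy).hasFDerivAt.prodMk projKc.hasFDerivAt)
    have hHsm : ∀ y ∈ A, ContDiffAt ℝ (⊤ : ℕ∞) H y := fun y hy =>
      ((hFvec.contDiffAt (hA.mem_nhds hy)).prodMk projKc.contDiff.contDiffAt)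
    -- dimensions
    have hrn : k + Module.finrank ℝ K = m := by
      have h1 := LinearMap.finrank_range_add_finrank_ker
        ((fderiv ℝ Fvec x0 : (Fin m → ℝ) →L[ℝ] (Fin k → ℝ)) :
          (Fin m → ℝ) →ₗ[ℝ] (Fin k → ℝ))
      rw [hrangef x0 hx0A] at h1
      rw [← hKdef] at h1
      simpa [Module.finrank_fin_fun] using h1
    have hdim : Module.finrank ℝ (Fin m → ℝ) = Module.finrank ℝ ((Fin k → ℝ) × K) := by
      rw [Module.finrank_prod, Module.finrank_fin_fun, Module.finrank_fin_fun, hrn]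
    have hinj : Function.Injective
        ((DH x0 : (Fin m → ℝ) →L[ℝ] ((Fin k → ℝ) × K)) :
          (Fin m → ℝ) →ₗ[ℝ] ((Fin k → ℝ) × K)) := by
      intro a b hab
      have hz : DH x0 (a - b) = 0 := by
        have : DH x0 a = DH x0 b := hab
        rw [map_sub, this, sub_self]
      have h1 : fderiv ℝ Fvec x0 (a - b) = 0 := congrArg Prod.fst hz
      have h2 : projKc (a - b) = 0 := congrArg Prod.snd hz
      have hmem : a - b ∈ K := by rw [hKdef]; exact h1
      have h3 : projK (a - b) = ⟨a - b, hmem⟩ :=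
        Submodule.linearProjOfIsCompl_apply_left hK' ⟨a - b, hmem⟩
      have h4 : projKc (a - b) = projK (a - b) := rfl
      rw [h4, h3] at h2
      have : a - b = 0 := congrArg Subtype.val h2
      exact sub_eq_zero.1 this
    set e0l : (Fin m → ℝ) ≃ₗ[ℝ] ((Fin k → ℝ) × K) :=
      LinearMap.linearEquivOfInjective
        ((DH x0 : (Fin m → ℝ) →L[ℝ] ((Fin k → ℝ) × K)) :
          (Fin m → ℝ) →ₗ[ℝ] ((Fin k → ℝ) × K)) hinj hdim with he0ldef
    set e0 : (Fin m → ℝ) ≃L[ℝ] ((Fin k → ℝ) × K) := e0l.toContinuousLinearEquiv with he0def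
    have he0 : (e0 : (Fin m → ℝ) →L[ℝ] ((Fin k → ℝ) × K)) = DH x0 := by
      refine ContinuousLinearMap.ext fun v => ?_
      show e0 v = DH x0 v
      rw [he0def]
      rw [LinearEquiv.coe_toContinuousLinearEquiv']
      rw [he0ldef]
      exact LinearMap.linearEquivOfInjective_apply hinj hdim v
    -- determinant test function and the good neighbourhood V
    set detf : (Fin m → ℝ) → ℝ :=
      fun y => ((e0.symm : ((Fin k → ℝ) × K) →L[ℝ] (Fin m → ℝ)).comp (DH y)).det with hdetfdef
    have hDHalt : ∀ y, DH y =
        (ContinuousLinearMap.inl ℝ (Fin k → ℝ) K).comp (fderiv ℝ Fvec y)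
          + (ContinuousLinearMap.inr ℝ (Fin k → ℝ) K).comp projKc := by
      intro y
      ext v <;> simp [hDHdef]
    have hDHcont : ContinuousOn DH A := by
      have h1 : ContinuousOn (fun y =>
          (ContinuousLinearMap.inl ℝ (Fin k → ℝ) K).comp (fderiv ℝ Fvec y)
            + (ContinuousLinearMap.inr ℝ (Fin k → ℝ) K).comp projKc) A :=
        (((ContinuousLinearMap.compL ℝ (Fin m → ℝ) (Fin k → ℝ) ((Fin k → ℝ) × K)
            (ContinuousLinearMap.inl ℝ (Fin k → ℝ) K)).continuous.comp_continuousOn hFveccont).add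
          continuousOn_const)
      have h2 : DH = fun y =>
          (ContinuousLinearMap.inl ℝ (Fin k → ℝ) K).comp (fderiv ℝ Fvec y)
            + (ContinuousLinearMap.inr ℝ (Fin k → ℝ) K).comp projKc := funext hDHalt
      rw [h2]
      exact h1
    have hdetcont : ContinuousOn detf A := by
      have h1 : Continuous fun f : (Fin m → ℝ) →L[ℝ] ((Fin k → ℝ) × K) =>
          ((e0.symm : ((Fin k → ℝ) × K) →L[ℝ] (Fin m → ℝ)).comp f).det :=
        ContinuousLinearMap.continuous_det.comp
          (ContinuousLinearMap.compL ℝ (Fin m → ℝ) ((Fin k → ℝ) × K) (Fin m → ℝ)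
            (e0.symm : ((Fin k → ℝ) × K) →L[ℝ] (Fin m → ℝ))).continuous
      exact h1.comp_continuousOn hDHcont
    set V : Set (Fin m → ℝ) := ({y ∈ A | detf y ≠ 0}) ∩ D with hVdef
    have hVsubD : V ⊆ D := fun y hy => hy.2
    have hVsubA : V ⊆ A := fun y hy => hy.1.1
    have hVopen : IsOpen V := by
      have h1 : IsOpen {y ∈ A | detf y ≠ 0} := by
        have : {y ∈ A | detf y ≠ 0} = A ∩ detf ⁻¹' {0}ᶜ := by
          ext z; simp
        rw [this]
        exact hdetcont.isOpen_inter_preimage hA isOpen_compl_singleton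
      exact h1.inter isOpen_interior
    have hx0V : x0 ∈ V := by
      refine ⟨⟨hx0A, ?_⟩, hx0⟩
      have hid : (e0.symm : ((Fin k → ℝ) × K) →L[ℝ] (Fin m → ℝ)).comp (DH x0)
          = ContinuousLinearMap.id ℝ (Fin m → ℝ) := by
        rw [← he0]
        ext v
        simp
      rw [hdetfdef]
      simp only [hid]
      rw [ContinuousLinearMap.det]
      simp
    have hDHeq : ∀ y ∈ V, ∃ ey : (Fin m → ℝ) ≃L[ℝ] ((Fin k → ℝ) × K),
        (ey : (Fin m → ℝ) →L[ℝ] ((Fin k → ℝ) × K)) = DH y := by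
      intro y hy
      refine ⟨((((e0.symm : ((Fin k → ℝ) × K) →L[ℝ] (Fin m → ℝ)).comp
        (DH y)).toContinuousLinearEquivOfDetNeZero hy.1.2).trans e0), ?_⟩
      exact ContinuousLinearMap.ext fun v => e0.apply_symm_apply ((DH y) v)
    -- inverse function theorem at x0
    have hd0 : HasFDerivAt H (e0 : (Fin m → ℝ) →L[ℝ] ((Fin k → ℝ) × K)) x0 := by
      rw [he0]; exact hDHy x0 hx0A
    set h := (hHsm x0 hx0A).toOpenPartialHomeomorph H hd0 (by simp) with hhdef
    have hcoe : ⇑h = H := rfl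
    have hx0src : x0 ∈ h.source := (hHsm x0 hx0A).mem_toOpenPartialHomeomorph_source hd0 (by simp)
    set w0 : (Fin k → ℝ) × K := H x0 with hw0def
    have hw0t : w0 ∈ h.target := by
      have := h.map_source hx0src
      rwa [hcoe] at this
    have hsymm0 : h.symm w0 = x0 := by
      have := h.left_inv hx0src
      rwa [hcoe] at this
    set O := h.target ∩ h.symm ⁻¹' (V ∩ h.source) with hOdef
    have hOopen : IsOpen O := h.isOpen_inter_preimage_symm (hVopen.inter h.open_source)
    have hw0O : w0 ∈ O := by
      refine ⟨hw0t, ?_⟩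
      rw [Set.mem_preimage, hsymm0]
      exact ⟨hx0V, hx0src⟩
    obtain ⟨ε, hε, hball⟩ := Metric.isOpen_iff.1 hOopen w0 hw0O
    set W := Metric.ball w0 ε with hWdef
    set U := h.source ∩ h ⁻¹' W with hUdef
    have hUopen : IsOpen U := h.isOpen_inter_preimage Metric.isOpen_ball
    have hx0U : x0 ∈ U := by
      refine ⟨hx0src, ?_⟩
      rw [Set.mem_preimage, hcoe, ← hw0def]
      exact Metric.mem_ball_self hε
    have hUprops : ∀ y ∈ U, H y ∈ W ∧ y ∈ V := by
      intro y hy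
      have h1 : h y ∈ W := hy.2
      have h2 : h y ∈ O := hball h1
      have h3 : h.symm (h y) = y := h.left_inv hy.1
      have h4 := h2.2
      rw [Set.mem_preimage, h3] at h4
      refine ⟨by rw [← hcoe]; exact h1, h4.1⟩
    have hUsubD : U ⊆ D := fun y hy => hVsubD (hUprops y hy).2
    have hUsubA : U ⊆ A := fun y hy => hVsubA (hUprops y hy).2
    have hWprops : ∀ w ∈ W, h.symm w ∈ U ∧ h.symm w ∈ V ∧ H (h.symm w) = w := by
      intro w hw
      have hO := hball hw
      have hwt : w ∈ h.target := hO.1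
      have hmem := hO.2
      rw [Set.mem_preimage] at hmem
      have hri : h (h.symm w) = w := h.right_inv hwt
      refine ⟨⟨hmem.2, ?_⟩, hmem.1, by rw [← hcoe]; exact hri⟩
      rw [Set.mem_preimage, hri]
      exact hw
    have hsymm_smooth : ∀ w ∈ W, ContDiffAt ℝ (⊤ : ℕ∞) h.symm w := by
      intro w hw
      obtain ⟨hU', hV', hH'⟩ := hWprops w hw
      obtain ⟨ey, hey⟩ := hDHeq (h.symm w) hV'
      refine h.contDiffAt_symm (f₀' := ey) (hball hw).1 ?_ ?_
      · rw [hcoe, hey]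
        exact hDHy _ (hVsubA hV')
      · rw [hcoe]
        exact hHsm _ (hVsubA hV')
    set u0 : Fin k → ℝ := Fvec x0 with hu0def
    set v0 : K := projKc x0 with hv0def
    set P : (Fin k → ℝ) → ℝ := fun u => G (h.symm (u, v0)) with hPdef
    have hmemW : ∀ u : Fin k → ℝ, u ∈ Metric.ball u0 ε →
        ((u, v0) : (Fin k → ℝ) × K) ∈ W := by
      intro u hu
      rw [hWdef, Metric.mem_ball]
      have hd : dist ((u, v0) : (Fin k → ℝ) × K) w0
          = max (dist u u0) (dist v0 v0) := Prod.dist_eq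
      rw [hd, dist_self]
      exact max_lt (Metric.mem_ball.1 hu) hε
    have himgsub : Fvec '' U ⊆ Metric.ball u0 ε := by
      rintro _ ⟨y, hy, rfl⟩
      have hHW := (hUprops y hy).1
      have hle : dist (Fvec y) u0 ≤ dist (H y) w0 := by
        rw [Prod.dist_eq]
        exact le_max_left _ _
      exact Metric.mem_ball.2 (lt_of_le_of_lt hle (Metric.mem_ball.1 hHW))
    have hPsm : ContDiffOn ℝ (⊤ : ℕ∞) P (Metric.ball u0 ε) := by
      intro u hu
      have hW' := hmemW u hu
      obtain ⟨hU', hV', hH'⟩ := hWprops _ hW'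
      have h1 : ContDiffAt ℝ (⊤ : ℕ∞) (fun u : Fin k → ℝ => ((u, v0) : (Fin k → ℝ) × K)) u :=
        (contDiff_id.prodMk contDiff_const).contDiffAt
      have h2 := hsymm_smooth _ hW'
      have h3 : ContDiffAt ℝ (⊤ : ℕ∞) G (h.symm (u, v0)) := hG.contDiffAt (hA.mem_nhds (hVsubA hV'))
      exact ((h3.comp _ h2).comp u h1).contDiffWithinAt
    refine ⟨U, hUopen, hx0U, hUsubD, P, hPsm.mono himgsub, ?_⟩
    -- the dependence identity on U
    intro y hy
    set w : (Fin k → ℝ) × K := H y with hwdef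
    have hwW : w ∈ W := (hUprops y hy).1
    have hyV : y ∈ V := (hUprops y hy).2
    set d : (Fin k → ℝ) × K := ((w.1, v0) : (Fin k → ℝ) × K) - w with hddef
    have hd1 : d.1 = 0 := by rw [hddef]; simp
    have hWTend : ((w.1, v0) : (Fin k → ℝ) × K) ∈ W := by
      rw [hWdef, Metric.mem_ball] at hwW ⊢
      have hw0v : w0.2 = v0 := rfl
      have h1 : dist ((w.1, v0) : (Fin k → ℝ) × K) w0 = max (dist w.1 w0.1) (dist v0 w0.2) :=
        Prod.dist_eq
      rw [h1, hw0v, dist_self]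
      refine max_lt ?_ hε
      calc dist w.1 w0.1 ≤ dist w w0 := by rw [Prod.dist_eq]; exact le_max_left _ _
      _ < ε := hwW
    have hseg : ∀ t ∈ Set.Icc (0:ℝ) 1, w + t • d ∈ W := fun t ht =>
      (convex_ball w0 ε).add_smul_sub_mem hwW hWTend ht
    set φ : ℝ → ℝ := fun t => G (h.symm (w + t • d)) with hφdef
    have hder : ∀ t ∈ Set.Icc (0:ℝ) 1, HasDerivAt φ 0 t := by
      intro t ht
      have hwt : w + t • d ∈ W := hseg t ht
      obtain ⟨hU', hV', hH'⟩ := hWprops _ hwt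
      obtain ⟨ey, hey⟩ := hDHeq (h.symm (w + t • d)) hV'
      have hsymmder : HasFDerivAt h.symm
          ((ey.symm : ((Fin k → ℝ) × K) →L[ℝ] (Fin m → ℝ))) (w + t • d) := by
        refine h.hasFDerivAt_symm (hball hwt).1 ?_
        rw [hcoe, hey]
        exact hDHy _ (hVsubA hV')
      have hline : HasDerivAt (fun t : ℝ => w + t • d) d t := by
        simpa using ((hasDerivAt_id t).smul_const d).const_add w
      have hGd : HasFDerivAt G (fderiv ℝ G (h.symm (w + t • d))) (h.symm (w + t • d)) :=
        (hGdiff _ (hVsubA hV')).hasFDerivAt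
      have hcomp := hGd.comp_hasDerivAt t (hsymmder.comp_hasDerivAt t hline)
      have hvker : fderiv ℝ Fvec (h.symm (w + t • d)) (ey.symm d) = 0 := by
        have happ : DH (h.symm (w + t • d)) (ey.symm d) = d := by
          rw [← hey]
          exact ey.apply_symm_apply d
        have h5 : fderiv ℝ Fvec (h.symm (w + t • d)) (ey.symm d) = d.1 := congrArg Prod.fst happ
        rw [h5, hd1]
      have hnsurj : ¬ Function.Surjective (fderiv ℝ Fall (h.symm (w + t • d))) := by
        intro hs
        have hdet := (hsurj_iff _ (hVsubA hV')).1 hs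
        exact (hDsubT (hVsubD hV')).2 ⟨hVsubA hV', hdet⟩
      have hval := key (h.symm (w + t • d)) (hVsubA hV') hnsurj (ey.symm d) hvker
      have : HasDerivAt φ (fderiv ℝ G (h.symm (w + t • d)) (ey.symm d)) t := hcomp
      rwa [hval] at this
    have hdiffOn : DifferentiableOn ℝ φ (Set.Icc 0 1) := fun t ht =>
      ((hder t ht).differentiableAt).differentiableWithinAt
    have hderivW : ∀ t ∈ Set.Ico (0:ℝ) 1, derivWithin φ (Set.Icc 0 1) t = 0 := fun t ht =>
      ((hder t (Set.Ico_subset_Icc_self ht)).hasDerivWithinAt).derivWithin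
        (uniqueDiffOn_Icc one_pos t (Set.Ico_subset_Icc_self ht))
    have hconst := constant_of_derivWithin_zero hdiffOn hderivW 1
      (Set.mem_Icc.2 ⟨zero_le_one, le_refl 1⟩)
    have hφ0 : φ 0 = G y := by
      rw [hφdef]
      simp only [zero_smul, add_zero]
      congr 1
      rw [hwdef, ← hcoe]
      exact h.left_inv hy.1
    have hφ1 : φ 1 = P (fun i => F i y) := by
      rw [hφdef]
      simp only [one_smul]
      have h6 : w + d = ((w.1, v0) : (Fin k → ℝ) × K) := by
        rw [hddef]
        abel
      rw [h6, hPdef]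
    rw [← hφ0, ← hconst, hφ1]
  · -- independence along I
    intro x hx
    have hs : Function.Surjective (fderiv ℝ Fall x) := (hsurj_iff x hx.1).2 hx.2
    have htop : LinearMap.range ((fderiv ℝ Fall x : (Fin m → ℝ) →L[ℝ] _) : (Fin m → ℝ) →ₗ[ℝ] (Fin (k + 1) → ℝ)) = ⊤ :=
      LinearMap.range_eq_top.2 (by simpa using hs)
    rw [mjac_rank_eq, htop]
    simp [Module.finrank_fin_fun]
end
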